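/- For n ≥ 2, every element of the multiplicative semigroup A^+(B_n) is decomposable; that is, for every f ∈ A^+(B_n) there exist g, h ∈ A^+(B_n) with g ≠ f, h ≠ f, and f = g∘h. -/

import Mathlib

def Bn (n : ℕ) : Type := Option (Fin n × Fin n)

def Bn.mul {n : ℕ} : Bn n → Bn n → Bn n
  | some (i, j), some (k, l) => if j = k then some (i, l) else none
  | _, _ => none

instance (n : ℕ) : Mul (Bn n) := ⟨Bn.mul⟩

instance (n : ℕ) : Semigroup (Bn n) where
  mul_assoc a b c := by
    show Bn.mul (Bn.mul a b) c = Bn.mul a (Bn.mul b c)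
    rcases a with _ | ⟨i, j⟩ <;> rcases b with _ | ⟨k, l⟩ <;> rcases c with _ | ⟨p, q⟩ <;>
      try rfl
    · unfold Bn.mul
      by_cases h1 : j = k <;> simp only [h1, ↓reduceIte] <;> rfl
    · unfold Bn.mul
      by_cases h1 : j = k <;> by_cases h2 : l = p <;> simp only [h1, h2, ↓reduceIte] <;> rfl

/-- Maps on `Bn n`, composed left-to-right: `x (f * g) = (x f) g`. -/
def MapBn (n : ℕ) : Type := Bn n → Bn n

instance (n : ℕ) : Monoid (MapBn n) where
  mul f g := fun x => g (f x)
  one := fun x => x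
  mul_assoc _ _ _ := rfl
  one_mul _ := rfl
  mul_one _ := rfl

/-- The constant map `ξ_c`. -/
def constMap (n : ℕ) (c : Bn n) : MapBn n := fun _ => c

/-- The `n`-support map `(p, q; σ)`, sending `(i, p) ↦ (iσ, q)` and all else to `θ`. -/
def nSuppMap (n : ℕ) (p q : Fin n) (σ : Equiv.Perm (Fin n)) : MapBn n :=
  fun x =>
    match x with
    | some (i, j) => if j = p then some (σ i, q) else none
    | none => none

instance (n : ℕ) : DecidableEq (Bn n) :=
  inferInstanceAs (DecidableEq (Option (Fin n × Fin n)))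

/-- The singleton-support map `((k,l) → (p,q))`. -/
def sglMap (n : ℕ) (k l p q : Fin n) : MapBn n :=
  fun x => @ite _ (x = some (k, l)) (instDecidableEqBn n x _) (some (p, q)) none

/-- The multiplicative semigroup reduct `A⁺(Bₙ)`, as a set of maps on `Bn n`. -/
def APlus (n : ℕ) : Set (MapBn n) :=
  {f | (∃ c, f = constMap n c) ∨ (∃ p q σ, f = nSuppMap n p q σ) ∨
       (∃ k l p q, f = sglMap n k l p q)}

/-- Independence of a subset of a semigroup. -/
def IndependentIn {S : Type*} [Semigroup S] (U : Set S) : Prop :=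
  ∀ a ∈ U, a ∉ Subsemigroup.closure (U \ {a})

/-!
Every element factors through a freely chosen intermediate point:
`ξ_c = ξ_{c'} * h` for any `h` sending `c'` to `c`, `(p,q;σ) = (p,r;στ⁻¹) * (r,q;τ)`, and
`((k,l)→(p,q)) = ((k,l)→(a,b)) * ((a,b)→(p,q))`. For `n ≥ 2` the intermediate data `c'`, `r`, `τ`,
`(a,b)` can be chosen so that neither factor equals the product.
-/

def DecomposableIn {M : Type*} [Mul M] (S : Set M) (f : M) : Prop :=
  ∃ g ∈ S, ∃ h ∈ S, g ≠ f ∧ h ≠ f ∧ f = g * h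

section

variable {n : ℕ}

theorem constMap_mem_APlus (c : Bn n) : constMap n c ∈ APlus n :=
  Or.inl ⟨c, rfl⟩

theorem nSuppMap_mem_APlus (p q : Fin n) (σ : Equiv.Perm (Fin n)) :
    nSuppMap n p q σ ∈ APlus n :=
  Or.inr (Or.inl ⟨p, q, σ, rfl⟩)

theorem sglMap_mem_APlus (k l p q : Fin n) : sglMap n k l p q ∈ APlus n :=
  Or.inr (Or.inr ⟨k, l, p, q, rfl⟩)

theorem constMap_mul (c : Bn n) (g : MapBn n) : constMap n c * g = constMap n (g c) := rfl

theorem constMap_injective : Function.Injective (constMap n) :=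
  fun _ _ h => congrFun h none

theorem nSuppMap_some (p q : Fin n) (σ : Equiv.Perm (Fin n)) (i j : Fin n) :
    nSuppMap n p q σ (some (i, j)) = if j = p then some (σ i, q) else none := rfl

theorem nSuppMap_mul_nSuppMap (p r q : Fin n) (σ τ : Equiv.Perm (Fin n)) :
    nSuppMap n p r σ * nSuppMap n r q τ = nSuppMap n p q (σ.trans τ) := by
  funext x
  rcases x with _ | ⟨i, j⟩
  · rfl
  · show nSuppMap n r q τ (nSuppMap n p r σ (some (i, j))) = _
    by_cases hj : j = p <;> simp only [nSuppMap_some, hj, if_true, if_false] <;> rfl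

theorem nSuppMap_inj [Nonempty (Fin n)] {p q p' q' : Fin n} {σ σ' : Equiv.Perm (Fin n)} :
    nSuppMap n p q σ = nSuppMap n p' q' σ' ↔ p = p' ∧ q = q' ∧ σ = σ' := by
  refine ⟨fun h => ?_, by rintro ⟨rfl, rfl, rfl⟩; rfl⟩
  obtain ⟨i₀⟩ := ‹Nonempty (Fin n)›
  have hp : p = p' := by
    have := congrFun h (some (i₀, p))
    by_contra hne
    simp [nSuppMap_some, hne] at this
  subst hp
  have hval (i : Fin n) : σ i = σ' i ∧ q = q' := by
    have := congrFun h (some (i, p))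
    simp only [nSuppMap_some, if_true] at this
    exact Prod.mk.inj (Option.some.inj this)
  exact ⟨rfl, (hval i₀).2, Equiv.ext fun i => (hval i).1⟩

theorem sglMap_apply_self (k l p q : Fin n) : sglMap n k l p q (some (k, l)) = some (p, q) :=
  if_pos rfl

theorem sglMap_apply_of_ne {k l p q : Fin n} {x : Bn n} (hx : x ≠ some (k, l)) :
    sglMap n k l p q x = none :=
  if_neg hx

theorem sglMap_mul_sglMap (k l a b p q : Fin n) :
    sglMap n k l a b * sglMap n a b p q = sglMap n k l p q := by
  funext x
  show sglMap n a b p q (sglMap n k l a b x) = _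
  by_cases hx : x = some (k, l)
  · subst hx
    simp only [sglMap_apply_self]
    rfl
  · simp only [sglMap_apply_of_ne hx]
    exact sglMap_apply_of_ne (Option.some_ne_none _).symm

theorem sglMap_inj {k l p q k' l' p' q' : Fin n} :
    sglMap n k l p q = sglMap n k' l' p' q' ↔ k = k' ∧ l = l' ∧ p = p' ∧ q = q' := by
  refine ⟨fun h => ?_, by rintro ⟨rfl, rfl, rfl, rfl⟩; rfl⟩
  have := congrFun h (some (k, l))
  by_cases hkl : (some (k, l) : Bn n) = some (k', l')
  · obtain ⟨rfl, rfl⟩ := Prod.mk.inj (Option.some.inj hkl)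
    simp only [sglMap_apply_self] at this
    obtain ⟨rfl, rfl⟩ := Prod.mk.inj (Option.some.inj this)
    exact ⟨rfl, rfl, rfl, rfl⟩
  · simp [sglMap_apply_self, sglMap_apply_of_ne hkl] at this

theorem sglMap_ne_constMap [Nontrivial (Fin n)] (k l p q : Fin n) (c : Bn n) :
    sglMap n k l p q ≠ constMap n c := by
  intro h
  obtain ⟨x, hx⟩ := exists_ne (k, l)
  have hkl : some (p, q) = c := (sglMap_apply_self k l p q).symm.trans (congrFun h _)
  have hx' : none = c :=
    (sglMap_apply_of_ne (mt Option.some.inj hx)).symm.trans (congrFun h (some x))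
  exact Option.some_ne_none _ (hkl.trans hx'.symm)

theorem constMap_decomposableIn [Nontrivial (Fin n)] (c : Bn n) :
    DecomposableIn (APlus n) (constMap n c) := by
  obtain ⟨x, hx⟩ : ∃ x : Fin n × Fin n, some x ≠ c := by
    rcases c with _ | y
    · obtain ⟨x⟩ : Nonempty (Fin n × Fin n) := inferInstance
      exact ⟨x, Option.some_ne_none x⟩
    · obtain ⟨x, hx⟩ := exists_ne y
      exact ⟨x, mt Option.some.inj hx⟩
  obtain ⟨h, h_mem, h_ne, hxc⟩ : ∃ h ∈ APlus n, h ≠ constMap n c ∧ h (some x) = c := by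
    rcases c with _ | ⟨p, q⟩
    · obtain ⟨y, hy⟩ := exists_ne x
      exact ⟨sglMap n y.1 y.2 y.1 y.2, sglMap_mem_APlus .., sglMap_ne_constMap _ _ _ _ _,
        sglMap_apply_of_ne (mt Option.some.inj hy.symm)⟩
    · exact ⟨sglMap n x.1 x.2 p q, sglMap_mem_APlus .., sglMap_ne_constMap _ _ _ _ _,
        sglMap_apply_self ..⟩
  exact ⟨constMap n (some x), constMap_mem_APlus _, h, h_mem,
    constMap_injective.ne hx, h_ne, ((constMap_mul _ h).trans (congrArg _ hxc)).symm⟩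

theorem nSuppMap_decomposableIn [Nontrivial (Fin n)] (p q : Fin n) (σ : Equiv.Perm (Fin n)) :
    DecomposableIn (APlus n) (nSuppMap n p q σ) := by
  obtain ⟨r, hr⟩ := exists_ne q
  obtain ⟨τ, hτ⟩ := exists_ne σ
  refine ⟨nSuppMap n p r (σ.trans τ.symm), nSuppMap_mem_APlus .., nSuppMap n r q τ,
    nSuppMap_mem_APlus .., fun h => hr (nSuppMap_inj.mp h).2.1,
    fun h => hτ (nSuppMap_inj.mp h).2.2, ?_⟩
  rw [nSuppMap_mul_nSuppMap, Equiv.trans_assoc, Equiv.symm_trans_self, Equiv.trans_refl]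

theorem sglMap_decomposableIn [Nontrivial (Fin n)] (k l p q : Fin n) :
    DecomposableIn (APlus n) (sglMap n k l p q) := by
  obtain ⟨a, ha⟩ := exists_ne k
  obtain ⟨b, hb⟩ := exists_ne q
  exact ⟨sglMap n k l a b, sglMap_mem_APlus .., sglMap n a b p q, sglMap_mem_APlus ..,
    fun h => hb (sglMap_inj.mp h).2.2.2, fun h => ha (sglMap_inj.mp h).1,
    (sglMap_mul_sglMap ..).symm⟩

end

theorem all_elements_decomposable (n : ℕ) (hn : 2 ≤ n) :
    ∀ f ∈ APlus n, ∃ g ∈ APlus n, ∃ h ∈ APlus n, g ≠ f ∧ h ≠ f ∧ f = g * h := by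
  have : Nontrivial (Fin n) := Fin.nontrivial_iff_two_le.mpr hn
  rintro f (⟨c, rfl⟩ | ⟨p, q, σ, rfl⟩ | ⟨k, l, p, q, rfl⟩)
  · exact constMap_decomposableIn c
  · exact nSuppMap_decomposableIn p q σ
  · exact sglMap_decomposableIn k l p q
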